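/- arXiv:0709.4332 — 4 statements merged into one kernel-verified Lean document; each statement's English description precedes it below -/
import Mathlib

section
/- For 0 < ε < 1, the function φ(t) = ε·(log(1/t) − 1) on I = (0,1] satisfies φ ∈ BMO_ε(I), ∫₀¹ φ(t) dt = 0, ∫₀¹ φ(t)² dt = ε², and ∫₀¹ e^{φ(t)} dt = e^{−ε}/(1−ε); in particular the constant e^{−ε}/(1−ε) in the integral-form John–Nirenberg inequality is attained. -/
open MeasureTheory Real

/-- The average of `φ` over the interval with endpoints `a`, `b`. -/
noncomputable def avg (φ : ℝ → ℝ) (a b : ℝ) : ℝ := (∫ t in a..b, φ t) / (b - a)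

/-- `φ ∈ BMO_ε([a,b])`: `φ` and `φ²` are integrable on `[a,b]` and the mean
oscillation `⟨φ²⟩_J − ⟨φ⟩_J²` is at most `ε²` on every nondegenerate
subinterval `J = [c,d] ⊆ [a,b]`. -/
def BMOe (ε a b : ℝ) (φ : ℝ → ℝ) : Prop :=
  IntervalIntegrable φ volume a b ∧
  IntervalIntegrable (fun t => (φ t) ^ 2) volume a b ∧
  ∀ c d : ℝ, a ≤ c → c < d → d ≤ b →
    avg (fun t => (φ t) ^ 2) c d - (avg φ c d) ^ 2 ≤ ε ^ 2

/-!
With `ψ(t) = -log t - 1`, the functions `-t log t` and `t (log² t + 1)` are primitives of `ψ` and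
`ψ²` that are continuous at `0`, so on `[c, d] ⊆ [0, 1]` the mean oscillation of `ψ` is
`1 - c d (log d - log c)² / (d - c)² ≤ 1`; multiplying by `ε` multiplies it by `ε²`.
Moreover `e^{εψ(t)} = e^{-ε} t^{-ε}`, whose integral over `[0, 1]` is `e^{-ε} / (1 - ε)`.
-/

open Set intervalIntegral

lemma avg_const_mul (k : ℝ) (φ : ℝ → ℝ) (a b : ℝ) :
    avg (fun t => k * φ t) a b = k * avg φ a b := by
  simp only [avg, intervalIntegral.integral_const_mul, mul_div_assoc]

lemma BMOe.const_mul {ε a b : ℝ} {φ : ℝ → ℝ} (hφ : BMOe ε a b φ) (k : ℝ) :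
    BMOe (k * ε) a b (fun t => k * φ t) := by
  obtain ⟨hφ₁, hφ₂, hosc⟩ := hφ
  refine ⟨hφ₁.const_mul k, (hφ₂.const_mul (k ^ 2)).congr fun t _ => by ring, ?_⟩
  intro c d hac hcd hdb
  have hsq : avg (fun t => (k * φ t) ^ 2) c d = k ^ 2 * avg (fun t => φ t ^ 2) c d := by
    simp only [mul_pow, avg_const_mul]
  rw [hsq, avg_const_mul, mul_pow, mul_pow, ← mul_sub]
  exact mul_le_mul_of_nonneg_left (hosc c d hac hcd hdb) (sq_nonneg k)

lemma BMOe_congr {ε a b : ℝ} {φ ψ : ℝ → ℝ} (hab : a ≤ b) (h : EqOn φ ψ (Ioo a b)) :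
    BMOe ε a b φ ↔ BMOe ε a b ψ := by
  have hsq : EqOn (fun t => φ t ^ 2) (fun t => ψ t ^ 2) (Ioo a b) := fun t ht => by
    simp only [h ht]
  have havg : ∀ {f g : ℝ → ℝ}, EqOn f g (Ioo a b) → ∀ {c d}, a ≤ c → c ≤ d → d ≤ b →
      avg f c d = avg g c d := fun hfg _ _ hac hcd hdb => by
    rw [avg, avg, integral_congr_Ioo_of_le hcd (hfg.mono (Ioo_subset_Ioo hac hdb))]
  rw [BMOe, BMOe, intervalIntegrable_congr_uIoo (h.mono (uIoo_of_le hab).subset),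
    intervalIntegrable_congr_uIoo (hsq.mono (uIoo_of_le hab).subset)]
  refine and_congr_right' (and_congr_right' (forall₂_congr fun c d => ?_))
  refine imp_congr_right fun hac => imp_congr_right fun hcd => imp_congr_right fun hdb => ?_
  rw [havg h hac hcd.le hdb, havg hsq hac hcd.le hdb]

lemma continuousOn_mul_log_sq_add_one :
    ContinuousOn (fun t => t * (log t ^ 2 + 1)) (Ici 0) := by
  -- `t log² t = 4 (√t log √t)²` exhibits the continuity at `0`.
  have h : Continuous fun t => 4 * (√t * log √t) ^ 2 + t := by fun_prop
  refine h.continuousOn.congr fun t (ht : 0 ≤ t) => ?_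
  simp only
  rw [log_sqrt ht, mul_pow, sq_sqrt ht]
  ring

lemma hasDerivAt_mul_log_sq_add_one {x : ℝ} (hx : x ≠ 0) :
    HasDerivAt (fun t => t * (log t ^ 2 + 1)) ((-log x - 1) ^ 2) x := by
  refine ((hasDerivAt_id' x).fun_mul (((hasDerivAt_log hx).fun_pow 2).add_const 1)).congr_deriv ?_
  field_simp
  ring

lemma intervalIntegrable_neg_log_sub_one_sq {c d : ℝ} (hc : 0 ≤ c) (hd : 0 ≤ d) :
    IntervalIntegrable (fun t => (-log t - 1) ^ 2) volume c d :=
  intervalIntegrable_deriv_of_nonneg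
    (continuousOn_mul_log_sq_add_one.mono fun _ ht => (le_min hc hd).trans ht.1)
    (fun _ ht => hasDerivAt_mul_log_sq_add_one ((le_min hc hd).trans_lt ht.1).ne')
    (fun _ _ => sq_nonneg _)

lemma integral_neg_log_sub_one_sq {c d : ℝ} (hc : 0 ≤ c) (hd : 0 ≤ d) :
    ∫ t in c..d, (-log t - 1) ^ 2 = d * (log d ^ 2 + 1) - c * (log c ^ 2 + 1) :=
  integral_eq_sub_of_hasDeriv_right
    (continuousOn_mul_log_sq_add_one.mono fun _ ht => (le_min hc hd).trans ht.1)
    (fun _ ht => (hasDerivAt_mul_log_sq_add_one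
      ((le_min hc hd).trans_lt ht.1).ne').hasDerivWithinAt)
    (intervalIntegrable_neg_log_sub_one_sq hc hd)

lemma integral_neg_log_sub_one (c d : ℝ) :
    ∫ t in c..d, (-log t - 1) = c * log c - d * log d := by
  rw [integral_sub (f := fun t => -log t) intervalIntegrable_log'.neg intervalIntegrable_const,
    intervalIntegral.integral_neg,
    integral_log, intervalIntegral.integral_const, smul_eq_mul]
  ring

lemma BMOe_neg_log_sub_one : BMOe 1 0 1 (fun t => -log t - 1) := by
  refine ⟨intervalIntegrable_log'.neg.sub intervalIntegrable_const,
    intervalIntegrable_neg_log_sub_one_sq le_rfl zero_le_one, fun c d hc hcd _ => ?_⟩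
  have hd : 0 ≤ d := hc.trans hcd.le
  have hdc : d - c ≠ 0 := (sub_pos.mpr hcd).ne'
  have key : avg (fun t => (-log t - 1) ^ 2) c d - avg (fun t => -log t - 1) c d ^ 2
      = 1 - c * d * (log d - log c) ^ 2 / (d - c) ^ 2 := by
    rw [avg, avg, integral_neg_log_sub_one_sq hc hd, integral_neg_log_sub_one]
    field_simp
    ring
  rw [key, one_pow, sub_le_self_iff]
  positivity

lemma exp_mul_neg_log_sub_one (ε : ℝ) {t : ℝ} (ht : 0 < t) :
    exp (ε * (-log t - 1)) = exp (-ε) * t ^ (-ε) := by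
  rw [rpow_def_of_pos ht, ← exp_add]
  congr 1
  ring

theorem stmt1_general (ε : ℝ) (hε1 : ε < 1)
    (φ : ℝ → ℝ)
    (hφ : ∀ t ∈ Set.Ioc (0 : ℝ) 1, φ t = ε * (Real.log (1 / t) - 1)) :
    BMOe ε 0 1 φ ∧
    (∫ t in (0:ℝ)..1, φ t) = 0 ∧
    (∫ t in (0:ℝ)..1, (φ t) ^ 2) = ε ^ 2 ∧
    IntervalIntegrable (fun t => Real.exp (φ t)) volume 0 1 ∧
    (∫ t in (0:ℝ)..1, Real.exp (φ t)) = Real.exp (-ε) / (1 - ε) := by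
  have hφ' : EqOn φ (fun t => ε * (-log t - 1)) (Ioo 0 1) := fun t ht => by
    rw [hφ t (Ioo_subset_Ioc_self ht), one_div, log_inv]
  have hsq : EqOn (fun t => φ t ^ 2) (fun t => ε ^ 2 * (-log t - 1) ^ 2) (Ioo 0 1) :=
    fun t ht => by simp only [hφ' ht, mul_pow]
  have hexp : EqOn (fun t => exp (φ t)) (fun t => exp (-ε) * t ^ (-ε)) (Ioo 0 1) :=
    fun t ht => by simp only [hφ' ht, exp_mul_neg_log_sub_one ε ht.1]
  have hrpow : -1 < -ε := by linarith
  refine ⟨?_, ?_, ?_, ?_, ?_⟩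
  · rw [BMOe_congr zero_le_one hφ']
    simpa using BMOe_neg_log_sub_one.const_mul ε
  · simp [integral_congr_Ioo_of_le zero_le_one hφ', integral_neg_log_sub_one]
  · simp [integral_congr_Ioo_of_le zero_le_one hsq, integral_neg_log_sub_one_sq]
  · have h := (intervalIntegrable_rpow' hrpow (a := 0) (b := 1)).const_mul
      (exp (-ε))
    rw [intervalIntegrable_iff_integrableOn_Ioo_of_le zero_le_one] at h ⊢
    exact h.congr_fun hexp.symm measurableSet_Ioo
  · rw [integral_congr_Ioo_of_le zero_le_one hexp, intervalIntegral.integral_const_mul,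
      integral_rpow (Or.inl hrpow), zero_rpow (by linarith), one_rpow]
    ring

/-- The extremal function `φ(t) = ε (log(1/t) − 1)` attains the sharp constant
`e^{−ε}/(1−ε)` in the integral-form John–Nirenberg inequality. -/
theorem stmt1 (ε : ℝ) (hε0 : 0 < ε) (hε1 : ε < 1)
    (φ : ℝ → ℝ)
    (hφ : ∀ t ∈ Set.Ioc (0 : ℝ) 1, φ t = ε * (Real.log (1 / t) - 1)) :
    BMOe ε 0 1 φ ∧
    (∫ t in (0:ℝ)..1, φ t) = 0 ∧
    (∫ t in (0:ℝ)..1, (φ t) ^ 2) = ε ^ 2 ∧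
    IntervalIntegrable (fun t => Real.exp (φ t)) volume 0 1 ∧
    (∫ t in (0:ℝ)..1, Real.exp (φ t)) = Real.exp (-ε) / (1 - ε) :=
  stmt1_general ε hε1 φ hφ
end

section
/- Let ε ≥ 1 and let (x₁, x₂) ∈ ℝ² satisfy x₁² < x₂ ≤ x₁² + ε². Then there exists φ ∈ BMO_ε((0,1]) with ∫₀¹ φ = x₁ and ∫₀¹ φ² = x₂ such that e^φ is not integrable on (0,1]. In particular, for ε ≥ 1 the integral-form John–Nirenberg inequality fails for every finite constant. -/
open MeasureTheory Real

/-!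
Take `φ = a · log⁺ (δ / t) + m`. On every `[c, d] ⊆ [0, ∞)` the logarithm has mean
oscillation `1 - c d ((log d - log c) / (d - c))² ≤ 1`, and post-composing with an
`a`-Lipschitz map `F` multiplies the mean oscillation by at most `a²` (compare `F ∘ g` with
the constant `F (avg g)`), so `φ ∈ BMO_a ⊆ BMO_ε` for `a ≤ ε`. For `a ≥ 1`,
`e^φ ≥ e^m δ / t` near `0`, which is not integrable. Finally `∫ φ = a δ + m` and the
variance of `φ` on `[0, 1]` is `a² (2δ - δ²)`; with `1 ≤ a ≤ ε` and `0 < δ ≤ 1` this takes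
every value in `(0, ε²]`.
-/

open intervalIntegral Set

noncomputable def meanOsc (φ : ℝ → ℝ) (c d : ℝ) : ℝ :=
  avg (fun t => φ t ^ 2) c d - avg φ c d ^ 2

section MeanOscillation

variable {f g : ℝ → ℝ} {c d : ℝ}

lemma IntervalIntegrable.sq_sub_const (hf : IntervalIntegrable f volume c d)
    (hf2 : IntervalIntegrable (fun t => f t ^ 2) volume c d) (C : ℝ) :
    IntervalIntegrable (fun t => (f t - C) ^ 2) volume c d := by
  convert (hf2.sub (hf.const_mul (2 * C))).add (intervalIntegrable_const (c := C ^ 2)) using 1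
  ext t; ring

lemma avg_sq_sub_const (hf : IntervalIntegrable f volume c d)
    (hf2 : IntervalIntegrable (fun t => f t ^ 2) volume c d) (hcd : c ≠ d) (C : ℝ) :
    avg (fun t => (f t - C) ^ 2) c d = meanOsc f c d + (avg f c d - C) ^ 2 := by
  have hlen : d - c ≠ 0 := sub_ne_zero.mpr hcd.symm
  have hexp : ∫ t in c..d, (f t - C) ^ 2 = (∫ t in c..d, f t ^ 2) - 2 * C * (∫ t in c..d, f t)
      + C ^ 2 * (d - c) := by
    have e : (fun t => (f t - C) ^ 2) = fun t => f t ^ 2 - 2 * C * f t + C ^ 2 :=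
      funext fun t => by ring
    rw [e, integral_add (hf2.sub (hf.const_mul _)) intervalIntegrable_const,
      integral_sub hf2 (hf.const_mul _), intervalIntegral.integral_const_mul,
      intervalIntegral.integral_const, smul_eq_mul]
    ring
  simp only [meanOsc, avg, hexp]
  generalize ∫ t in c..d, f t ^ 2 = I₂
  generalize ∫ t in c..d, f t = I₁
  field_simp
  ring

lemma meanOsc_le_avg_sq_sub_const (hf : IntervalIntegrable f volume c d)
    (hf2 : IntervalIntegrable (fun t => f t ^ 2) volume c d) (hcd : c ≠ d) (C : ℝ) :
    meanOsc f c d ≤ avg (fun t => (f t - C) ^ 2) c d := by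
  rw [avg_sq_sub_const hf hf2 hcd]
  exact le_add_of_nonneg_right (sq_nonneg _)

namespace LipschitzWith

variable {F : ℝ → ℝ} {K : NNReal}

lemma intervalIntegrable_comp (hF : LipschitzWith K F) (hg : IntervalIntegrable g volume c d) :
    IntervalIntegrable (fun t => F (g t)) volume c d := by
  refine ((intervalIntegrable_const (c := |F 0|)).add (hg.norm.const_mul K)).mono_fun'
    (hF.continuous.comp_aestronglyMeasurable hg.def'.aestronglyMeasurable) ?_
  refine Filter.Eventually.of_forall fun t => ?_
  have := hF.dist_le_mul (g t) 0
  simp only [Real.dist_eq, sub_zero, Real.norm_eq_abs] at this ⊢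
  linarith [abs_sub_abs_le_abs_sub (F (g t)) (F 0)]

lemma intervalIntegrable_comp_sq (hF : LipschitzWith K F) (hg : IntervalIntegrable g volume c d)
    (hg2 : IntervalIntegrable (fun t => g t ^ 2) volume c d) :
    IntervalIntegrable (fun t => F (g t) ^ 2) volume c d := by
  refine ((intervalIntegrable_const (c := 2 * F 0 ^ 2)).add
    (hg2.const_mul (2 * K ^ 2))).mono_fun'
    ((hF.continuous.comp_aestronglyMeasurable hg.def'.aestronglyMeasurable).pow 2) ?_
  refine Filter.Eventually.of_forall fun t => ?_
  have := hF.dist_le_mul (g t) 0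
  simp only [Real.dist_eq, sub_zero, Real.norm_eq_abs, abs_pow, sq_abs] at this ⊢
  have hsq : (F (g t) - F 0) ^ 2 ≤ K ^ 2 * g t ^ 2 := by
    rw [← sq_abs, ← sq_abs (g t), ← mul_pow]
    exact pow_le_pow_left₀ (abs_nonneg _) this 2
  nlinarith [sq_nonneg (F (g t) - 2 * F 0)]

lemma meanOsc_comp_le (hF : LipschitzWith K F) (hg : IntervalIntegrable g volume c d)
    (hg2 : IntervalIntegrable (fun t => g t ^ 2) volume c d) (hcd : c < d) :
    meanOsc (fun t => F (g t)) c d ≤ K ^ 2 * meanOsc g c d := by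
  set μ := avg g c d
  have hpoint : ∀ t, (F (g t) - F μ) ^ 2 ≤ K ^ 2 * (g t - μ) ^ 2 := fun t => by
    rw [← sq_abs, ← sq_abs (g t - μ), ← mul_pow, ← Real.dist_eq, ← Real.dist_eq]
    exact pow_le_pow_left₀ dist_nonneg (hF.dist_le_mul _ _) 2
  calc meanOsc (fun t => F (g t)) c d
      ≤ avg (fun t => (F (g t) - F μ) ^ 2) c d :=
        meanOsc_le_avg_sq_sub_const (hF.intervalIntegrable_comp hg)
          (hF.intervalIntegrable_comp_sq hg hg2) hcd.ne _
    _ ≤ avg (fun t => K ^ 2 * (g t - μ) ^ 2) c d :=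
        div_le_div_of_nonneg_right (integral_mono_on hcd.le
          ((hF.intervalIntegrable_comp hg).sq_sub_const (hF.intervalIntegrable_comp_sq hg hg2) _)
          ((hg.sq_sub_const hg2 μ).const_mul _) fun t _ => hpoint t) (sub_pos.mpr hcd).le
    _ = K ^ 2 * meanOsc g c d := by
        rw [avg, intervalIntegral.integral_const_mul, mul_div_assoc, ← avg,
          avg_sq_sub_const hg hg2 hcd.ne, sub_self]
        ring

end LipschitzWith

end MeanOscillation

section Logarithm

lemma continuousOn_mul_log_sq : ContinuousOn (fun t => t * log t ^ 2) (Ici 0) := by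
  have h : Continuous fun t => (2 * (√t * log √t)) ^ 2 := by
    have := continuous_mul_log.comp continuous_sqrt
    fun_prop
  refine h.continuousOn.congr fun t (ht : 0 ≤ t) => ?_
  simp only [log_sqrt ht, mul_pow, sq_sqrt ht]
  ring

lemma hasDerivAt_mul_log_sub_one_sq_add {x : ℝ} (hx : 0 < x) :
    HasDerivAt (fun t => t * (log t - 1) ^ 2 + t) (log x ^ 2) x := by
  refine (((hasDerivAt_id' x).mul (((hasDerivAt_log hx.ne').sub_const 1).pow 2)).add
    (hasDerivAt_id' x)).congr_deriv ?_
  simp only [Pi.pow_apply]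
  field_simp
  ring

lemma continuousOn_mul_log_sub_one_sq_add :
    ContinuousOn (fun t => t * (log t - 1) ^ 2 + t) (Ici 0) := by
  have := (continuousOn_mul_log_sq.sub
    ((continuous_mul_log.const_mul 2).continuousOn)).add ((continuous_id.const_mul 2).continuousOn)
  refine this.congr fun t _ => ?_
  simp only [Pi.add_apply, Pi.sub_apply, id]
  ring

variable {c d : ℝ}

lemma intervalIntegrable_log_sq (hc : 0 ≤ c) (hd : 0 ≤ d) :
    IntervalIntegrable (fun t => log t ^ 2) volume c d := by
  have hsub : uIcc c d ⊆ Ici 0 := fun t ht => le_trans (le_min hc hd) ht.1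
  refine intervalIntegrable_deriv_of_nonneg (continuousOn_mul_log_sub_one_sq_add.mono hsub)
    (fun _ hx => hasDerivAt_mul_log_sub_one_sq_add ?_) fun _ _ => sq_nonneg _
  exact lt_of_le_of_lt (le_min hc hd) hx.1

lemma integral_log_sq (hc : 0 ≤ c) (hcd : c ≤ d) :
    ∫ t in c..d, log t ^ 2 = (d * (log d - 1) ^ 2 + d) - (c * (log c - 1) ^ 2 + c) :=
  integral_eq_sub_of_hasDerivAt_of_le hcd
    (continuousOn_mul_log_sub_one_sq_add.mono fun _ ht => hc.trans ht.1)
    (fun _ hx => hasDerivAt_mul_log_sub_one_sq_add (hc.trans_lt hx.1))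
    (intervalIntegrable_log_sq hc (hc.trans hcd))

lemma meanOsc_log (hc : 0 ≤ c) (hcd : c < d) :
    meanOsc log c d = 1 - c * d * ((log d - log c) / (d - c)) ^ 2 := by
  have hlen : d - c ≠ 0 := (sub_pos.mpr hcd).ne'
  rw [meanOsc, avg, avg, integral_log_sq hc hcd.le, integral_log]
  field_simp
  ring

lemma meanOsc_log_le_one (hc : 0 ≤ c) (hcd : c < d) : meanOsc log c d ≤ 1 := by
  rw [meanOsc_log hc hcd]
  have : 0 ≤ c * d := mul_nonneg hc (hc.trans hcd.le)
  nlinarith [sq_nonneg ((log d - log c) / (d - c))]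

end Logarithm

noncomputable def logSpike (δ t : ℝ) : ℝ := max (log δ - log t) 0

lemma lipschitzWith_mul_max_sub_add {a : ℝ} (ha : 0 ≤ a) (b m : ℝ) :
    LipschitzWith a.toNNReal (fun x => a * max (b - x) 0 + m) := by
  refine LipschitzWith.of_dist_le_mul fun x y => ?_
  rw [Real.coe_toNNReal a ha, Real.dist_eq, Real.dist_eq, add_sub_add_right_eq_sub, ← mul_sub,
    abs_mul, abs_of_nonneg ha]
  refine mul_le_mul_of_nonneg_left ((abs_max_sub_max_le_abs _ _ _).trans ?_) ha
  rw [sub_sub_sub_cancel_left, abs_sub_comm]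

section LogSpike

variable {δ : ℝ}

lemma intervalIntegrable_logSpike (δ c d : ℝ) : IntervalIntegrable (logSpike δ) volume c d := by
  have := (lipschitzWith_mul_max_sub_add zero_le_one (log δ) 0).intervalIntegrable_comp
    (intervalIntegrable_log' (a := c) (b := d))
  simp only [one_mul, add_zero] at this
  exact this

lemma intervalIntegrable_logSpike_sq (δ : ℝ) {c d : ℝ} (hc : 0 ≤ c) (hd : 0 ≤ d) :
    IntervalIntegrable (fun t => logSpike δ t ^ 2) volume c d := by
  simpa [logSpike] using
    (lipschitzWith_mul_max_sub_add zero_le_one (log δ) 0).intervalIntegrable_comp_sq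
    intervalIntegrable_log' (intervalIntegrable_log_sq hc hd)

lemma logSpike_of_mem_Ioc {t : ℝ} (ht : t ∈ Ioc 0 δ) : logSpike δ t = log δ - log t :=
  max_eq_left (sub_nonneg.mpr (log_le_log ht.1 ht.2))

lemma logSpike_of_le {t : ℝ} (hδ : 0 < δ) (ht : δ ≤ t) : logSpike δ t = 0 :=
  max_eq_right (sub_nonpos.mpr (log_le_log hδ ht))

lemma integral_logSpike_pow (hδ : 0 < δ) (hδ1 : δ ≤ 1) {n : ℕ} (hn : n ≠ 0)
    (hint : ∀ c d : ℝ, 0 ≤ c → 0 ≤ d →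
      IntervalIntegrable (fun t => logSpike δ t ^ n) volume c d) :
    ∫ t in 0..1, logSpike δ t ^ n = ∫ t in 0..δ, (log δ - log t) ^ n := by
  have hleft : ∫ t in 0..δ, logSpike δ t ^ n = ∫ t in 0..δ, (log δ - log t) ^ n :=
    intervalIntegral.integral_congr_ae (Filter.Eventually.of_forall fun t ht => by
      rw [uIoc_of_le hδ.le] at ht; rw [logSpike_of_mem_Ioc ht])
  have hright : ∫ t in δ..1, logSpike δ t ^ n = 0 := by
    rw [integral_congr (g := fun _ => 0) fun t ht => by
      rw [uIcc_of_le hδ1] at ht; simp [logSpike_of_le hδ ht.1, zero_pow hn]]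
    simp
  rw [← integral_add_adjacent_intervals (hint 0 δ le_rfl hδ.le) (hint δ 1 hδ.le zero_le_one),
    hleft, hright, add_zero]

lemma integral_logSpike (hδ : 0 < δ) (hδ1 : δ ≤ 1) : ∫ t in 0..1, logSpike δ t = δ := by
  have := integral_logSpike_pow hδ hδ1 one_ne_zero
    fun c d _ _ => by simpa using intervalIntegrable_logSpike δ c d
  simp only [pow_one] at this
  rw [this, integral_sub intervalIntegrable_const intervalIntegrable_log', integral_log]
  simp

lemma integral_logSpike_sq (hδ : 0 < δ) (hδ1 : δ ≤ 1) :
    ∫ t in 0..1, logSpike δ t ^ 2 = 2 * δ := by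
  rw [integral_logSpike_pow hδ hδ1 two_ne_zero
    fun c d hc hd => intervalIntegrable_logSpike_sq δ hc hd]
  have e : (fun t => (log δ - log t) ^ 2) =
      fun t => log δ ^ 2 - 2 * log δ * log t + log t ^ 2 := funext fun t => by ring
  rw [e, integral_add (intervalIntegrable_const.sub (intervalIntegrable_log'.const_mul _))
      (intervalIntegrable_log_sq le_rfl hδ.le),
    integral_sub intervalIntegrable_const (intervalIntegrable_log'.const_mul _),
    intervalIntegral.integral_const_mul, integral_log, integral_log_sq le_rfl hδ.le,
    intervalIntegral.integral_const]
  simp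
  ring

end LogSpike

section Counterexample

variable {ε a δ : ℝ}

lemma bmo_mul_logSpike_add (ha : 0 ≤ a) (haε : a ≤ ε) (m : ℝ) :
    BMOe ε 0 1 (fun t => a * logSpike δ t + m) := by
  have hG := lipschitzWith_mul_max_sub_add ha (log δ) m
  refine ⟨hG.intervalIntegrable_comp intervalIntegrable_log',
    hG.intervalIntegrable_comp_sq intervalIntegrable_log'
      (intervalIntegrable_log_sq le_rfl zero_le_one),
    fun c d hc hcd _ => ?_⟩
  calc meanOsc (fun t => a * max (log δ - log t) 0 + m) c d
      ≤ a.toNNReal ^ 2 * meanOsc log c d :=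
        hG.meanOsc_comp_le intervalIntegrable_log'
          (intervalIntegrable_log_sq hc (hc.trans hcd.le)) hcd
    _ ≤ ε ^ 2 := by
        rw [Real.coe_toNNReal a ha]
        nlinarith [meanOsc_log_le_one hc hcd]

lemma integral_mul_logSpike_add (hδ : 0 < δ) (hδ1 : δ ≤ 1) (m : ℝ) :
    ∫ t in 0..1, (a * logSpike δ t + m) = a * δ + m := by
  rw [integral_add ((intervalIntegrable_logSpike δ 0 1).const_mul a) intervalIntegrable_const,
    intervalIntegral.integral_const_mul, integral_logSpike hδ hδ1,
    intervalIntegral.integral_const]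
  simp

lemma integral_mul_logSpike_add_sq (hδ : 0 < δ) (hδ1 : δ ≤ 1) (m : ℝ) :
    ∫ t in 0..1, (a * logSpike δ t + m) ^ 2 = 2 * a ^ 2 * δ + 2 * a * m * δ + m ^ 2 := by
  have e : (fun t => (a * logSpike δ t + m) ^ 2) =
      fun t => a ^ 2 * logSpike δ t ^ 2 + 2 * a * m * logSpike δ t + m ^ 2 :=
    funext fun t => by ring
  have hsq := intervalIntegrable_logSpike_sq δ le_rfl zero_le_one
  rw [e, integral_add ((hsq.const_mul _).add ((intervalIntegrable_logSpike δ 0 1).const_mul _))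
      intervalIntegrable_const,
    integral_add (hsq.const_mul _) ((intervalIntegrable_logSpike δ 0 1).const_mul _),
    intervalIntegral.integral_const_mul, intervalIntegral.integral_const_mul,
    integral_logSpike hδ hδ1, integral_logSpike_sq hδ hδ1, intervalIntegral.integral_const]
  simp
  ring

lemma not_intervalIntegrable_exp_mul_logSpike_add (ha : 1 ≤ a) (hδ : 0 < δ) (hδ1 : δ ≤ 1)
    (m : ℝ) : ¬ IntervalIntegrable (fun t => exp (a * logSpike δ t + m)) volume 0 1 := by
  intro hexp
  have hbound : ∀ t ∈ Ioc 0 δ, t⁻¹ ≤ (exp m * δ)⁻¹ * exp (a * logSpike δ t + m) := by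
    intro t ht
    have hspike : logSpike δ t ≤ a * logSpike δ t :=
      le_mul_of_one_le_left (le_max_right _ _) ha
    calc t⁻¹ = (exp m * δ)⁻¹ * exp (logSpike δ t + m) := by
          rw [logSpike_of_mem_Ioc ht, exp_add, exp_sub, exp_log hδ, exp_log ht.1]
          field_simp
      _ ≤ (exp m * δ)⁻¹ * exp (a * logSpike δ t + m) := by gcongr
  have hinv : IntervalIntegrable (fun t => t⁻¹) volume 0 δ := by
    refine ((hexp.mono_set ?_).const_mul (exp m * δ)⁻¹).mono_fun'
      measurable_inv.aestronglyMeasurable ?_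
    · rw [uIcc_of_le hδ.le, uIcc_of_le zero_le_one]
      exact Icc_subset_Icc_right hδ1
    · rw [Filter.EventuallyLE, uIoc_of_le hδ.le, ae_restrict_iff' measurableSet_Ioc]
      refine Filter.Eventually.of_forall fun t ht => ?_
      rw [Real.norm_of_nonneg (inv_nonneg.mpr ht.1.le)]
      exact hbound t ht
  rw [intervalIntegrable_inv_iff] at hinv
  rcases hinv with h | h
  · exact hδ.ne h
  · exact h left_mem_uIcc

/-- `a ^ 2 * (2 * δ - δ ^ 2)` is the variance of `a * logSpike δ + m` over `[0, 1]`. -/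
lemma exists_logSpike_parameters (hε : 1 ≤ ε) {V : ℝ} (hV : 0 < V) (hVε : V ≤ ε ^ 2) :
    ∃ a δ : ℝ, 1 ≤ a ∧ a ≤ ε ∧ 0 < δ ∧ δ ≤ 1 ∧ a ^ 2 * (2 * δ - δ ^ 2) = V := by
  rcases le_total 1 V with hV1 | hV1
  · refine ⟨√V, 1, one_le_sqrt.mpr hV1, ?_, zero_lt_one, le_rfl, ?_⟩
    · exact sqrt_le_iff.mpr ⟨by linarith, hVε⟩
    · rw [sq_sqrt hV.le]; ring
  · have hs : √(1 - V) ^ 2 = 1 - V := sq_sqrt (by linarith)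
    have hs1 : √(1 - V) < 1 := (sqrt_lt' one_pos).mpr (by linarith)
    refine ⟨1, 1 - √(1 - V), le_rfl, hε, by linarith, by linarith [sqrt_nonneg (1 - V)], ?_⟩
    nlinarith

end Counterexample

/-- For `ε ≥ 1`, the integral-form John–Nirenberg inequality fails: for every
point `(x₁,x₂)` with `x₁² < x₂ ≤ x₁² + ε²` there is `φ ∈ BMO_ε((0,1])` with the
prescribed averages and `e^φ` not integrable. -/
theorem stmt2 (ε x₁ x₂ : ℝ) (hε : 1 ≤ ε) (h1 : x₁ ^ 2 < x₂) (h2 : x₂ ≤ x₁ ^ 2 + ε ^ 2) :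
    ∃ φ : ℝ → ℝ, BMOe ε 0 1 φ ∧
      (∫ t in (0:ℝ)..1, φ t) = x₁ ∧
      (∫ t in (0:ℝ)..1, (φ t) ^ 2) = x₂ ∧
      ¬ IntervalIntegrable (fun t => Real.exp (φ t)) volume 0 1 := by
  obtain ⟨a, δ, ha, haε, hδ, hδ1, hvar⟩ :=
    exists_logSpike_parameters hε (sub_pos.mpr h1) (sub_le_iff_le_add'.mpr h2)
  refine ⟨fun t => a * logSpike δ t + (x₁ - a * δ), bmo_mul_logSpike_add (by linarith) haε _,
    ?_, ?_, not_intervalIntegrable_exp_mul_logSpike_add ha hδ hδ1 _⟩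
  · rw [integral_mul_logSpike_add hδ hδ1]; ring
  · rw [integral_mul_logSpike_add_sq hδ hδ1]; linear_combination hvar
end

section
/- Let x⁻, x⁺ ∈ ℝ² and α₋, α₊ ≥ 0 with α₋ + α₊ = 1, and suppose the straight-line segment with endpoints x⁻ and x⁺ lies entirely in Ω_δ. Then: (i) if 0 < δ < 1, B⁺_δ(α₋x⁻ + α₊x⁺) ≥ α₋·B⁺_δ(x⁻) + α₊·B⁺_δ(x⁺); (ii) if δ > 0, B⁻_δ(α₋x⁻ + α₊x⁺) ≤ α₋·B⁻_δ(x⁻) + α₊·B⁻_δ(x⁺). That is, B⁺_δ is locally concave and B⁻_δ is locally convex in Ω_δ. -/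
open MeasureTheory Real

/-- The parabolic strip `Ω_ε = {x : x₁² ≤ x₂ ≤ x₁² + ε²}`. -/
def Omega (ε : ℝ) : Set (ℝ × ℝ) := {x | x.1 ^ 2 ≤ x.2 ∧ x.2 ≤ x.1 ^ 2 + ε ^ 2}

/-- The upper Bellman function `B⁺_δ`. -/
noncomputable def Bp (δ : ℝ) (x : ℝ × ℝ) : ℝ :=
  (1 - Real.sqrt (δ ^ 2 + x.1 ^ 2 - x.2)) / (1 - δ) *
    Real.exp (x.1 + Real.sqrt (δ ^ 2 + x.1 ^ 2 - x.2) - δ)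

/-- The lower Bellman function `B⁻_δ`. -/
noncomputable def Bm (δ : ℝ) (x : ℝ × ℝ) : ℝ :=
  (1 + Real.sqrt (δ ^ 2 + x.1 ^ 2 - x.2)) / (1 + δ) *
    Real.exp (x.1 - Real.sqrt (δ ^ 2 + x.1 ^ 2 - x.2) + δ)

/-! With `r(x) = √(δ² + x₁² − x₂)` and `w = (x₁ − y₁) ± (r(x) − r(y))`, one has
`B^±_δ(x) = E (1 ∓ r(x)) eʷ` for a constant `E > 0` depending only on `y`, while the tangent
plane of `B^±_δ` at `y`, evaluated at `x`, is `E ((1 ∓ r(x)) (1 + w) + w² / 2)`. Elementary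
bounds on `eʷ − 1 − w` compare the two whenever `±w ≤ 2 r(x)`, i.e. `±(x₁ − y₁) ≤ r(x) + r(y)`,
and this holds as soon as the segment `[y, x]` stays below the parabola `x₂ = x₁² + δ²`.
Hence, for a point `p` of a segment in `Ω_δ`, the values of `B⁺_δ` (resp. `B⁻_δ`) at both
endpoints lie below (resp. above) its tangent plane at `p`, and averaging this affine function
gives concavity (resp. convexity) along the segment. -/

lemma exp_sub_one_sub_le_sq_half_of_nonpos {w : ℝ} (hw : w ≤ 0) :
    exp w - 1 - w ≤ w ^ 2 / 2 := by
  have hmono : Monotone fun t : ℝ => exp t - 1 - t - t ^ 2 / 2 := by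
    refine monotone_of_hasDerivAt_nonneg (f' := fun t => exp t - 1 - t) (fun t => ?_)
      (fun t => by simp only [Pi.zero_apply]; linarith [add_one_le_exp t])
    exact ((((hasDerivAt_exp t).sub_const 1).sub (hasDerivAt_id' t)).sub
      ((hasDerivAt_pow 2 t).div_const 2)).congr_deriv (by norm_num)
  simpa using hmono hw

lemma monotone_sq_sub_two_sub_mul_exp_sub_one_sub :
    Monotone fun w : ℝ => w ^ 2 - (2 - w) * (exp w - 1 - w) := by
  refine monotone_of_hasDerivAt_nonneg (f' := fun t => (t - 1) * exp t + 1) (fun t => ?_)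
    (fun t => ?_)
  · exact ((hasDerivAt_pow 2 t).sub (((hasDerivAt_id' t).const_sub 2).mul
      (((hasDerivAt_exp t).sub_const 1).sub (hasDerivAt_id' t)))).congr_deriv (by norm_num; ring)
  · have := mul_le_mul_of_nonneg_right (one_sub_le_exp_neg t) (exp_pos t).le
    rw [← exp_add, neg_add_cancel, exp_zero] at this
    simp only [Pi.zero_apply]
    linarith

lemma one_sub_mul_exp_le {s w : ℝ} (hs : 0 ≤ s) (hw : w ≤ 2 * s) :
    (1 - s) * exp w ≤ (1 - s) * (1 + w) + w ^ 2 / 2 := by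
  have hg : 0 ≤ exp w - 1 - w := by linarith [add_one_le_exp w]
  rcases le_or_gt w 0 with hw0 | hw0
  · nlinarith [exp_sub_one_sub_le_sq_half_of_nonpos hw0, mul_nonneg hs hg]
  · have : 0 ≤ w ^ 2 - (2 - w) * (exp w - 1 - w) := by
      simpa using monotone_sq_sub_two_sub_mul_exp_sub_one_sub hw0.le
    nlinarith [mul_nonneg (by linarith : 0 ≤ s - w / 2) hg]

lemma one_add_mul_add_le_mul_exp {s w : ℝ} (hs : 0 ≤ s) (hw : -(2 * s) ≤ w) :
    (1 + s) * (1 + w) + w ^ 2 / 2 ≤ (1 + s) * exp w := by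
  have hg : 0 ≤ exp w - 1 - w := by linarith [add_one_le_exp w]
  rcases le_or_gt 0 w with hw0 | hw0
  · nlinarith [quadratic_le_exp_of_nonneg hw0, mul_nonneg hs hg]
  · have : w ^ 2 - (2 - w) * (exp w - 1 - w) ≤ 0 := by
      simpa using monotone_sq_sub_two_sub_mul_exp_sub_one_sub hw0.le
    nlinarith [mul_nonneg (by linarith : 0 ≤ s + w / 2) hg]

lemma abs_le_add_of_forall_mul_one_sub_mul_sq_le {a b h : ℝ} (ha : 0 ≤ a) (hb : 0 ≤ b)
    (H : ∀ t ∈ Set.Icc (0 : ℝ) 1, t * (1 - t) * h ^ 2 ≤ (1 - t) * a ^ 2 + t * b ^ 2) :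
    |h| ≤ a + b := by
  refine abs_le_of_sq_le_sq ?_ (by positivity)
  by_contra! hlt
  have hh : 0 < h ^ 2 := (sq_nonneg _).trans_lt hlt
  have hne : h ≠ 0 := by rintro rfl; simp at hh
  have hlt' : (a - b) ^ 2 < h ^ 2 := by nlinarith [mul_nonneg ha hb]
  -- the vertex of the quadratic `(1 − t) a² + t b² − t (1 − t) h²`, where it is negative
  set t := (h ^ 2 + a ^ 2 - b ^ 2) / (2 * h ^ 2) with ht
  have htI : t ∈ Set.Icc (0 : ℝ) 1 :=
    ⟨div_nonneg (by nlinarith) (by positivity), (div_le_one (by positivity)).2 (by nlinarith)⟩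
  have hvertex : 4 * h ^ 2 * ((1 - t) * a ^ 2 + t * b ^ 2 - t * (1 - t) * h ^ 2) =
      -((h ^ 2 - (a + b) ^ 2) * (h ^ 2 - (a - b) ^ 2)) := by
    rw [ht]; field_simp; ring
  nlinarith [H t htI, mul_pos (sub_pos.2 hlt) (sub_pos.2 hlt')]

noncomputable def sqrtGap (δ : ℝ) (x : ℝ × ℝ) : ℝ := √(δ ^ 2 + x.1 ^ 2 - x.2)

lemma sq_sqrtGap {δ : ℝ} {x : ℝ × ℝ} (hx : x ∈ Omega δ) :
    sqrtGap δ x ^ 2 = δ ^ 2 + x.1 ^ 2 - x.2 :=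
  sq_sqrt (by linarith [hx.2])

lemma abs_fst_sub_le_sqrtGap_add {δ : ℝ} {x y : ℝ × ℝ} (hseg : segment ℝ y x ⊆ Omega δ) :
    |x.1 - y.1| ≤ sqrtGap δ y + sqrtGap δ x := by
  refine abs_le_add_of_forall_mul_one_sub_mul_sq_le (sqrt_nonneg _) (sqrt_nonneg _)
    fun t ⟨ht0, ht1⟩ => ?_
  have hz : ((1 - t) • y + t • x).2 ≤ ((1 - t) • y + t • x).1 ^ 2 + δ ^ 2 :=
    (hseg ⟨1 - t, t, by linarith, ht0, by ring, rfl⟩).2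
  simp only [Prod.fst_add, Prod.snd_add, Prod.smul_fst, Prod.smul_snd, smul_eq_mul] at hz
  rw [sq_sqrtGap (hseg (left_mem_segment ℝ y x)), sq_sqrtGap (hseg (right_mem_segment ℝ y x))]
  linear_combination hz

def planeThrough (y : ℝ × ℝ) (c g₁ g₂ : ℝ) : ℝ × ℝ →ᵃ[ℝ] ℝ where
  toFun x := c + g₁ * (x.1 - y.1) + g₂ * (x.2 - y.2)
  linear := g₁ • LinearMap.fst ℝ ℝ ℝ + g₂ • LinearMap.snd ℝ ℝ ℝ
  map_vadd' x v := by
    simp only [vadd_eq_add, Prod.fst_add, Prod.snd_add, LinearMap.add_apply, LinearMap.smul_apply,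
      LinearMap.fst_apply, smul_eq_mul, LinearMap.snd_apply]
    ring

lemma planeThrough_apply (y : ℝ × ℝ) (c g₁ g₂ : ℝ) (x : ℝ × ℝ) :
    planeThrough y c g₁ g₂ x = c + g₁ * (x.1 - y.1) + g₂ * (x.2 - y.2) := rfl

noncomputable def BpTangent (δ : ℝ) (y : ℝ × ℝ) : ℝ × ℝ →ᵃ[ℝ] ℝ :=
  let E := exp (y.1 + sqrtGap δ y - δ) / (1 - δ)
  planeThrough y (E * (1 - sqrtGap δ y)) (E * (1 - sqrtGap δ y - y.1)) (E / 2)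

noncomputable def BmTangent (δ : ℝ) (y : ℝ × ℝ) : ℝ × ℝ →ᵃ[ℝ] ℝ :=
  let E := exp (y.1 - sqrtGap δ y + δ) / (1 + δ)
  planeThrough y (E * (1 + sqrtGap δ y)) (E * (1 + sqrtGap δ y - y.1)) (E / 2)

lemma BpTangent_self (δ : ℝ) (y : ℝ × ℝ) : BpTangent δ y y = Bp δ y := by
  simp only [BpTangent, planeThrough_apply, Bp, sqrtGap]; ring

lemma BmTangent_self (δ : ℝ) (y : ℝ × ℝ) : BmTangent δ y y = Bm δ y := by
  simp only [BmTangent, planeThrough_apply, Bm, sqrtGap]; ring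

lemma Bp_le_BpTangent {δ : ℝ} (hδ : δ < 1) {x y : ℝ × ℝ} (hseg : segment ℝ y x ⊆ Omega δ) :
    Bp δ x ≤ BpTangent δ y x := by
  have hx := sq_sqrtGap (hseg (right_mem_segment ℝ y x))
  have hy := sq_sqrtGap (hseg (left_mem_segment ℝ y x))
  have hxy := (abs_le.1 (abs_fst_sub_le_sqrtGap_add hseg)).2
  set s := sqrtGap δ x
  set s₀ := sqrtGap δ y
  set E := exp (y.1 + s₀ - δ) / (1 - δ)
  have hexp : exp (x.1 + s - δ) = exp (y.1 + s₀ - δ) * exp (x.1 - y.1 + s - s₀) := by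
    rw [← exp_add]; ring_nf
  set w := x.1 - y.1 + s - s₀
  have hE : 0 ≤ E := div_nonneg (exp_pos _).le (by linarith)
  calc Bp δ x = (1 - s) / (1 - δ) * exp (x.1 + s - δ) := rfl
    _ = E * ((1 - s) * exp w) := by rw [hexp]; ring
    _ ≤ E * ((1 - s) * (1 + w) + w ^ 2 / 2) :=
        mul_le_mul_of_nonneg_left (one_sub_mul_exp_le (sqrt_nonneg _) (by linarith)) hE
    _ = BpTangent δ y x := by
        simp only [BpTangent, planeThrough_apply]
        linear_combination (E / 2) * (hy - hx)

lemma BmTangent_le_Bm {δ : ℝ} (hδ : 0 < δ) {x y : ℝ × ℝ} (hseg : segment ℝ y x ⊆ Omega δ) :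
    BmTangent δ y x ≤ Bm δ x := by
  have hx := sq_sqrtGap (hseg (right_mem_segment ℝ y x))
  have hy := sq_sqrtGap (hseg (left_mem_segment ℝ y x))
  have hxy := (abs_le.1 (abs_fst_sub_le_sqrtGap_add hseg)).1
  set s := sqrtGap δ x
  set s₀ := sqrtGap δ y
  set E := exp (y.1 - s₀ + δ) / (1 + δ)
  have hexp : exp (x.1 - s + δ) = exp (y.1 - s₀ + δ) * exp (x.1 - y.1 - s + s₀) := by
    rw [← exp_add]; ring_nf
  set w := x.1 - y.1 - s + s₀
  have hE : 0 ≤ E := by positivity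
  calc BmTangent δ y x = E * ((1 + s) * (1 + w) + w ^ 2 / 2) := by
        simp only [BmTangent, planeThrough_apply]
        linear_combination (E / 2) * (hx - hy)
    _ ≤ E * ((1 + s) * exp w) :=
        mul_le_mul_of_nonneg_left (one_add_mul_add_le_mul_exp (sqrt_nonneg _) (by linarith)) hE
    _ = (1 + s) / (1 + δ) * exp (x.1 - s + δ) := by rw [hexp]; ring
    _ = Bm δ x := rfl

section

variable {E : Type*} [AddCommGroup E] [Module ℝ E] {f : E → ℝ} {a b : E} {α β : ℝ}

lemma combo_le_of_le_affineMap (L : E →ᵃ[ℝ] ℝ) (hα : 0 ≤ α) (hβ : 0 ≤ β) (hαβ : α + β = 1)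
    (ha : f a ≤ L a) (hb : f b ≤ L b) (hL : L (α • a + β • b) = f (α • a + β • b)) :
    α * f a + β * f b ≤ f (α • a + β • b) :=
  calc α * f a + β * f b ≤ α * L a + β * L b := by gcongr
    _ = f (α • a + β • b) := by rw [← hL, Convex.combo_affine_apply hαβ, smul_eq_mul, smul_eq_mul]

lemma le_combo_of_affineMap_le (L : E →ᵃ[ℝ] ℝ) (hα : 0 ≤ α) (hβ : 0 ≤ β) (hαβ : α + β = 1)
    (ha : L a ≤ f a) (hb : L b ≤ f b) (hL : L (α • a + β • b) = f (α • a + β • b)) :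
    f (α • a + β • b) ≤ α * f a + β * f b :=
  calc f (α • a + β • b) = α * L a + β * L b := by
        rw [← hL, Convex.combo_affine_apply hαβ, smul_eq_mul, smul_eq_mul]
    _ ≤ α * f a + β * f b := by gcongr

end

/-- Local concavity of `B⁺_δ` (for `0 < δ < 1`) and local convexity of `B⁻_δ`
(for `δ > 0`) in `Ω_δ`: along any segment contained in `Ω_δ`. -/
theorem stmt10 (δ : ℝ) (xm xp : ℝ × ℝ) (αm αp : ℝ)
    (hαm : 0 ≤ αm) (hαp : 0 ≤ αp) (hsum : αm + αp = 1)
    (hseg : segment ℝ xm xp ⊆ Omega δ) :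
    (0 < δ → δ < 1 →
      αm * Bp δ xm + αp * Bp δ xp ≤ Bp δ (αm • xm + αp • xp)) ∧
    (0 < δ →
      Bm δ (αm • xm + αp • xp) ≤ αm * Bm δ xm + αp * Bm δ xp) := by
  set p := αm • xm + αp • xp
  have hp : p ∈ segment ℝ xm xp := ⟨αm, αp, hαm, hαp, hsum, rfl⟩
  have hsegm : segment ℝ p xm ⊆ Omega δ :=
    ((convex_segment xm xp).segment_subset hp (left_mem_segment ℝ xm xp)).trans hseg
  have hsegp : segment ℝ p xp ⊆ Omega δ :=
    ((convex_segment xm xp).segment_subset hp (right_mem_segment ℝ xm xp)).trans hseg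
  refine ⟨fun _ hδ => ?_, fun hδ => ?_⟩
  · exact combo_le_of_le_affineMap (BpTangent δ p) hαm hαp hsum (Bp_le_BpTangent hδ hsegm)
      (Bp_le_BpTangent hδ hsegp) (BpTangent_self δ p)
  · exact le_combo_of_affineMap_le (BmTangent δ p) hαm hαp hsum (BmTangent_le_Bm hδ hsegm)
      (BmTangent_le_Bm hδ hsegp) (BmTangent_self δ p)
end

section
/- Let 0 < ε < ε₁, let I = [A,B] be a nondegenerate bounded interval, and let φ ∈ BMO_ε(I). Then there exists c ∈ (A,B) such that, writing I₋ = [A,c], I₊ = [c,B], and x^± = (⟨φ⟩_{I_±}, ⟨φ²⟩_{I_±}), the entire straight-line segment with endpoints x⁻ and x⁺ lies in Ω_{ε₁}, and moreover min(|I₋|, |I₊|)/|I| ≥ min(1/2, √(1 − (ε/ε₁)²)), a bound independent of φ and I. -/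
open MeasureTheory Real

/-! Let `x⁻`, `x⁺`, `x` be the points `(⟨φ⟩, ⟨φ²⟩)` of `[A, c]`, `[c, B]`, `[A, B]`, with
weights `σ = c - A`, `τ = B - c`, and let `p = √(ε₁² - gap x⁻)`, `q = √(ε₁² - gap x⁺)`, where
`gap (u, v) = v - u²`. The chord `[x⁻, x⁺]` lies in `Ω_{ε₁}` as soon as `|x⁺₁ - x⁻₁| ≤ p + q`, and
the variance decomposition `(σ + τ)² gap x = (σ + τ)(σ gap x⁻ + τ gap x⁺) + στ (x⁺₁ - x⁻₁)²`
together with `gap x ≤ ε²` yields this whenever `|σ p - τ q| ≤ (σ + τ) √(ε₁² - ε²)`. Since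
`p, q ∈ [√(ε₁² - ε²), ε₁]`, the continuous function `c ↦ σ p - τ q` is at most that tolerance at
`c = A + r (B - A)` and at least minus it at `c = B - r (B - A)`, for the `r` of the statement;
the intermediate value theorem then provides `c`. -/

open Set

def parabolaGap (x : ℝ × ℝ) : ℝ := x.2 - x.1 ^ 2

noncomputable def bellmanPoint (φ : ℝ → ℝ) (a b : ℝ) : ℝ × ℝ :=
  (avg φ a b, avg (fun t => φ t ^ 2) a b)

lemma continuous_parabolaGap : Continuous parabolaGap := by
  unfold parabolaGap
  fun_prop

lemma mem_Omega_iff {ε : ℝ} {x : ℝ × ℝ} :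
    x ∈ Omega ε ↔ 0 ≤ parabolaGap x ∧ parabolaGap x ≤ ε ^ 2 := by
  simp only [Omega, parabolaGap, mem_ofPred_eq, sub_nonneg, sub_le_iff_le_add']

lemma Omega_mono {ε ε₁ : ℝ} (h : ε ^ 2 ≤ ε₁ ^ 2) : Omega ε ⊆ Omega ε₁ :=
  fun _ hx => ⟨hx.1, by linarith [hx.2]⟩

lemma sqrt_sub_parabolaGap_mem_Icc {ε ε₁ δ : ℝ} {x : ℝ × ℝ} (hx : x ∈ Omega ε)
    (hδ : ε ^ 2 + δ ^ 2 = ε₁ ^ 2) (hδ0 : 0 ≤ δ) (hε₁ : 0 ≤ ε₁) :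
    √(ε₁ ^ 2 - parabolaGap x) ∈ Icc δ ε₁ := by
  rw [mem_Omega_iff] at hx
  have := sq_nonneg δ
  exact ⟨(Real.le_sqrt hδ0 (by linarith)).2 (by linarith),
    (Real.sqrt_le_left hε₁).2 (by linarith)⟩

/-- Variance decomposition for a two-piece split with weights `σ`, `τ`. -/
lemma parabolaGap_combination {σ τ : ℝ} {x y m : ℝ × ℝ} (hm : (σ + τ) • m = σ • x + τ • y) :
    (σ + τ) ^ 2 * parabolaGap m =
      (σ + τ) * (σ * parabolaGap x + τ * parabolaGap y) + σ * τ * (y.1 - x.1) ^ 2 := by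
  have h₁ : (σ + τ) * m.1 = σ * x.1 + τ * y.1 := by simpa using congrArg Prod.fst hm
  have h₂ : (σ + τ) * m.2 = σ * x.2 + τ * y.2 := by simpa using congrArg Prod.snd hm
  unfold parabolaGap
  linear_combination (σ + τ) * h₂ - ((σ + τ) * m.1 + σ * x.1 + τ * y.1) * h₁

/-- Along the chord, with `p`, `q` the square roots in the hypothesis, the gap is
`σ gap x + τ gap y + στ (y.1 - x.1)² ≤ ε² - (σ p - τ q)²`. -/
lemma segment_subset_Omega {ε : ℝ} {x y : ℝ × ℝ} (hx : x ∈ Omega ε) (hy : y ∈ Omega ε)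
    (h : |y.1 - x.1| ≤ √(ε ^ 2 - parabolaGap x) + √(ε ^ 2 - parabolaGap y)) :
    segment ℝ x y ⊆ Omega ε := by
  rw [mem_Omega_iff] at hx hy
  rintro _ ⟨σ, τ, hσ, hτ, hστ, rfl⟩
  have hgap := parabolaGap_combination (m := σ • x + τ • y) (by rw [hστ, one_smul])
  set p := √(ε ^ 2 - parabolaGap x)
  set q := √(ε ^ 2 - parabolaGap y)
  have hp : p ^ 2 = ε ^ 2 - parabolaGap x := sq_sqrt (by linarith)
  have hq : q ^ 2 = ε ^ 2 - parabolaGap y := sq_sqrt (by linarith)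
  have hd : (y.1 - x.1) ^ 2 ≤ (p + q) ^ 2 := sq_le_sq' (abs_le.1 h).1 (abs_le.1 h).2
  obtain rfl : τ = 1 - σ := by linarith
  rw [mem_Omega_iff]
  constructor
  · nlinarith [mul_nonneg hσ hx.1, mul_nonneg hτ hy.1,
      mul_nonneg (mul_nonneg hσ hτ) (sq_nonneg (y.1 - x.1))]
  · nlinarith [mul_le_mul_of_nonneg_left hd (mul_nonneg hσ hτ), sq_nonneg (σ * p - (1 - σ) * q)]

/-- With `p`, `q` the square roots, the variance decomposition of `m` and `gap m ≤ ε²`, together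
with `(σ p - τ q)² ≤ (σ + τ)² δ²`, leave exactly `στ (y.1 - x.1)² ≤ στ (p + q)²`. -/
lemma abs_sub_le_of_balanced {σ τ ε ε₁ δ : ℝ} {x y m : ℝ × ℝ} (hσ : 0 < σ) (hτ : 0 < τ)
    (hm : (σ + τ) • m = σ • x + τ • y) (hδ : ε ^ 2 + δ ^ 2 = ε₁ ^ 2)
    (hmε : m ∈ Omega ε) (hx : x ∈ Omega ε₁) (hy : y ∈ Omega ε₁)
    (hbal : |σ * √(ε₁ ^ 2 - parabolaGap x) - τ * √(ε₁ ^ 2 - parabolaGap y)| ≤ (σ + τ) * δ) :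
    |y.1 - x.1| ≤ √(ε₁ ^ 2 - parabolaGap x) + √(ε₁ ^ 2 - parabolaGap y) := by
  rw [mem_Omega_iff] at hmε hx hy
  set p := √(ε₁ ^ 2 - parabolaGap x)
  set q := √(ε₁ ^ 2 - parabolaGap y)
  have hp : p ^ 2 = ε₁ ^ 2 - parabolaGap x := sq_sqrt (by linarith)
  have hq : q ^ 2 = ε₁ ^ 2 - parabolaGap y := sq_sqrt (by linarith)
  have hgap := parabolaGap_combination hm
  rw [show parabolaGap x = ε₁ ^ 2 - p ^ 2 by linarith,
    show parabolaGap y = ε₁ ^ 2 - q ^ 2 by linarith] at hgap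
  have hbal₂ := sq_le_sq' (abs_le.1 hbal).1 (abs_le.1 hbal).2
  have hmε₂ := mul_le_mul_of_nonneg_left hmε.2 (sq_nonneg (σ + τ))
  have hστ : σ * τ * (y.1 - x.1) ^ 2 ≤ σ * τ * (p + q) ^ 2 := by nlinarith
  exact abs_le_of_sq_le_sq (le_of_mul_le_mul_left hστ (mul_pos hσ hτ)) (by positivity)

lemma integral_eq_sub_mul_avg (φ : ℝ → ℝ) {a b : ℝ} (h : a ≠ b) :
    ∫ t in a..b, φ t = (b - a) * avg φ a b := by
  rw [avg, mul_div_cancel₀ _ (sub_ne_zero.2 h.symm)]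

lemma sub_mul_avg_add_sub_mul_avg {φ : ℝ → ℝ} {a b c : ℝ} (hab : a < b) (hbc : b < c)
    (h : IntervalIntegrable φ volume a c) :
    (b - a) * avg φ a b + (c - b) * avg φ b c = (c - a) * avg φ a c := by
  have hb : b ∈ uIcc a c := Icc_subset_uIcc ⟨hab.le, hbc.le⟩
  rw [← integral_eq_sub_mul_avg φ hab.ne, ← integral_eq_sub_mul_avg φ hbc.ne,
    ← integral_eq_sub_mul_avg φ (hab.trans hbc).ne,
    intervalIntegral.integral_add_adjacent_intervals
      (h.mono_set (uIcc_subset_uIcc left_mem_uIcc hb))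
      (h.mono_set (uIcc_subset_uIcc hb right_mem_uIcc))]

lemma bellmanPoint_split {φ : ℝ → ℝ} {a b c : ℝ} (hab : a < b) (hbc : b < c)
    (h₁ : IntervalIntegrable φ volume a c) (h₂ : IntervalIntegrable (fun t => φ t ^ 2) volume a c) :
    (c - a) • bellmanPoint φ a c = (b - a) • bellmanPoint φ a b + (c - b) • bellmanPoint φ b c :=
  Prod.ext (sub_mul_avg_add_sub_mul_avg hab hbc h₁).symm
    (sub_mul_avg_add_sub_mul_avg hab hbc h₂).symm

/-- The variance `⟨φ²⟩ - ⟨φ⟩²` is `⟨(φ - ⟨φ⟩)²⟩ ≥ 0`. -/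
lemma parabolaGap_bellmanPoint_nonneg {φ : ℝ → ℝ} {a b : ℝ} (hab : a < b)
    (h₁ : IntervalIntegrable φ volume a b) (h₂ : IntervalIntegrable (fun t => φ t ^ 2) volume a b) :
    0 ≤ parabolaGap (bellmanPoint φ a b) := by
  set m := avg φ a b
  have hsq : ∫ t in a..b, (φ t - m) ^ 2 = (b - a) * parabolaGap (bellmanPoint φ a b) := by
    have h₃ : IntervalIntegrable (fun t => φ t ^ 2 - 2 * φ t * m) volume a b :=
      h₂.sub ((h₁.const_mul 2).mul_const m)
    simp_rw [sub_sq]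
    rw [intervalIntegral.integral_add h₃ intervalIntegrable_const,
      intervalIntegral.integral_sub h₂ ((h₁.const_mul 2).mul_const m),
      intervalIntegral.integral_mul_const, intervalIntegral.integral_const_mul,
      integral_eq_sub_mul_avg φ hab.ne, integral_eq_sub_mul_avg _ hab.ne,
      intervalIntegral.integral_const, smul_eq_mul]
    simp only [parabolaGap, bellmanPoint, m]
    ring
  have hnonneg : 0 ≤ ∫ t in a..b, (φ t - m) ^ 2 :=
    intervalIntegral.integral_nonneg hab.le fun t _ => sq_nonneg _
  rw [hsq] at hnonneg
  exact nonneg_of_mul_nonneg_right hnonneg (sub_pos.2 hab)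

lemma continuousOn_avg_right {φ : ℝ → ℝ} {a b : ℝ} (h : IntervalIntegrable φ volume a b) :
    ContinuousOn (avg φ a) (Ioc a b) :=
  ((intervalIntegral.continuousOn_primitive_interval ((intervalIntegrable_iff').mp h)).mono
    (Ioc_subset_Icc_self.trans Icc_subset_uIcc)).div₀ (continuousOn_id.sub continuousOn_const)
    fun _ hc => sub_ne_zero.2 hc.1.ne'

lemma continuousOn_avg_left {φ : ℝ → ℝ} {a b : ℝ} (h : IntervalIntegrable φ volume a b) :
    ContinuousOn (fun c => avg φ c b) (Ico a b) :=
  ((intervalIntegral.continuousOn_primitive_interval_left ((intervalIntegrable_iff').mp h)).mono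
    (Ico_subset_Icc_self.trans Icc_subset_uIcc)).div₀ (continuousOn_const.sub continuousOn_id)
    fun _ hc => sub_ne_zero.2 hc.2.ne'

lemma BMOe.bellmanPoint_mem_Omega {ε a b c d : ℝ} {φ : ℝ → ℝ} (hφ : BMOe ε a b φ)
    (hac : a ≤ c) (hcd : c < d) (hdb : d ≤ b) : bellmanPoint φ c d ∈ Omega ε := by
  have hsub : uIcc c d ⊆ uIcc a b :=
    uIcc_subset_uIcc (Icc_subset_uIcc ⟨hac, hcd.le.trans hdb⟩)
      (Icc_subset_uIcc ⟨hac.trans hcd.le, hdb⟩)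
  exact mem_Omega_iff.2 ⟨parabolaGap_bellmanPoint_nonneg hcd (hφ.1.mono_set hsub)
    (hφ.2.1.mono_set hsub), hφ.2.2 c d hac hcd hdb⟩

lemma BMOe.continuousOn_bellmanPoint_right {ε a b : ℝ} {φ : ℝ → ℝ} (hφ : BMOe ε a b φ) :
    ContinuousOn (bellmanPoint φ a) (Ioc a b) :=
  (continuousOn_avg_right hφ.1).prodMk (continuousOn_avg_right hφ.2.1)

lemma BMOe.continuousOn_bellmanPoint_left {ε a b : ℝ} {φ : ℝ → ℝ} (hφ : BMOe ε a b φ) :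
    ContinuousOn (fun c => bellmanPoint φ c b) (Ico a b) :=
  (continuousOn_avg_left hφ.1).prodMk (continuousOn_avg_left hφ.2.1)

lemma exists_mem_Icc_abs_le {g : ℝ → ℝ} {u v K : ℝ} (huv : u ≤ v)
    (hg : ContinuousOn g (Icc u v)) (hK : 0 ≤ K) (hu : g u ≤ K) (hv : -K ≤ g v) :
    ∃ c ∈ Icc u v, |g c| ≤ K := by
  by_cases h : -K ≤ g u
  · exact ⟨u, left_mem_Icc.2 huv, abs_le.2 ⟨h, hu⟩⟩
  · obtain ⟨c, hc, hgc⟩ := intermediate_value_Icc huv hg ⟨(not_le.1 h).le, hv⟩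
    exact ⟨c, hc, by rw [hgc, abs_neg, abs_of_nonneg hK]⟩

lemma exists_balanced_split {A B r ε₁ δ : ℝ} {p q : ℝ → ℝ} (hAB : A < B) (hr₀ : 0 ≤ r)
    (hr : r ≤ 1 / 2) (hrδ : r * ε₁ ≤ (2 - r) * δ) (hδ : 0 ≤ δ)
    (hp : ∀ c ∈ Icc (A + r * (B - A)) (B - r * (B - A)), p c ∈ Icc δ ε₁)
    (hq : ∀ c ∈ Icc (A + r * (B - A)) (B - r * (B - A)), q c ∈ Icc δ ε₁)
    (hpc : ContinuousOn p (Icc (A + r * (B - A)) (B - r * (B - A))))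
    (hqc : ContinuousOn q (Icc (A + r * (B - A)) (B - r * (B - A)))) :
    ∃ c ∈ Icc (A + r * (B - A)) (B - r * (B - A)),
      |(c - A) * p c - (B - c) * q c| ≤ (B - A) * δ := by
  have hL : 0 < B - A := sub_pos.2 hAB
  have huv : A + r * (B - A) ≤ B - r * (B - A) := by nlinarith
  obtain ⟨-, hpu⟩ := hp _ (left_mem_Icc.2 huv)
  obtain ⟨hqu, -⟩ := hq _ (left_mem_Icc.2 huv)
  obtain ⟨hpv, -⟩ := hp _ (right_mem_Icc.2 huv)
  obtain ⟨-, hqv⟩ := hq _ (right_mem_Icc.2 huv)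
  have hrδL := mul_le_mul_of_nonneg_left hrδ hL.le
  refine exists_mem_Icc_abs_le huv (((continuousOn_id.sub continuousOn_const).mul hpc).sub
    ((continuousOn_const.sub continuousOn_id).mul hqc)) (mul_nonneg hL.le hδ) ?_ ?_
  · have := mul_le_mul_of_nonneg_left hpu (mul_nonneg hr₀ hL.le)
    have := mul_le_mul_of_nonneg_left hqu (mul_nonneg (by linarith : 0 ≤ 1 - r) hL.le)
    nlinarith
  · have := mul_le_mul_of_nonneg_left hpv (mul_nonneg (by linarith : 0 ≤ 1 - r) hL.le)
    have := mul_le_mul_of_nonneg_left hqv (mul_nonneg hr₀ hL.le)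
    nlinarith

lemma BMOe.exists_balanced_point {ε ε₁ δ r A B : ℝ} {φ : ℝ → ℝ} (hφ : BMOe ε A B φ)
    (hAB : A < B) (hr₀ : 0 < r) (hr : r ≤ 1 / 2) (hδ : ε ^ 2 + δ ^ 2 = ε₁ ^ 2) (hδ₀ : 0 ≤ δ)
    (hε₁ : 0 ≤ ε₁) (hrδ : r * ε₁ ≤ (2 - r) * δ) :
    ∃ c ∈ Icc (A + r * (B - A)) (B - r * (B - A)),
      |(c - A) * √(ε₁ ^ 2 - parabolaGap (bellmanPoint φ A c)) -
        (B - c) * √(ε₁ ^ 2 - parabolaGap (bellmanPoint φ c B))| ≤ (B - A) * δ := by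
  have hmid : Icc (A + r * (B - A)) (B - r * (B - A)) ⊆ Ioo A B := by
    have := mul_pos hr₀ (sub_pos.2 hAB)
    exact fun c hc => ⟨by linarith [hc.1], by linarith [hc.2]⟩
  have hdist (c d : ℝ) (hAc : A ≤ c) (hcd : c < d) (hdB : d ≤ B) :=
    sqrt_sub_parabolaGap_mem_Icc (hφ.bellmanPoint_mem_Omega hAc hcd hdB) hδ hδ₀ hε₁
  exact exists_balanced_split hAB hr₀.le hr hrδ hδ₀
    (fun c hc => hdist A c le_rfl (hmid hc).1 (hmid hc).2.le)
    (fun c hc => hdist c B (hmid hc).1.le (hmid hc).2 le_rfl)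
    ((continuousOn_const.sub (continuous_parabolaGap.comp_continuousOn
      hφ.continuousOn_bellmanPoint_right)).sqrt.mono (hmid.trans Ioo_subset_Ioc_self))
    ((continuousOn_const.sub (continuous_parabolaGap.comp_continuousOn
      hφ.continuousOn_bellmanPoint_left)).sqrt.mono (hmid.trans Ioo_subset_Ico_self))

lemma BMOe.segment_subset_Omega_of_balanced {ε ε₁ δ A B c : ℝ} {φ : ℝ → ℝ}
    (hφ : BMOe ε A B φ) (hc : c ∈ Ioo A B) (hδ : ε ^ 2 + δ ^ 2 = ε₁ ^ 2)
    (hbal : |(c - A) * √(ε₁ ^ 2 - parabolaGap (bellmanPoint φ A c)) -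
        (B - c) * √(ε₁ ^ 2 - parabolaGap (bellmanPoint φ c B))| ≤ (B - A) * δ) :
    segment ℝ (bellmanPoint φ A c) (bellmanPoint φ c B) ⊆ Omega ε₁ := by
  obtain ⟨hAc, hcB⟩ := hc
  have hεε₁ : ε ^ 2 ≤ ε₁ ^ 2 := by nlinarith [sq_nonneg δ]
  have hx := Omega_mono hεε₁ (hφ.bellmanPoint_mem_Omega le_rfl hAc hcB.le)
  have hy := Omega_mono hεε₁ (hφ.bellmanPoint_mem_Omega hAc.le hcB le_rfl)
  have hsplit := bellmanPoint_split hAc hcB hφ.1 hφ.2.1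
  rw [← sub_add_sub_cancel' c A B] at hsplit hbal
  exact segment_subset_Omega hx hy (abs_sub_le_of_balanced (sub_pos.2 hAc) (sub_pos.2 hcB)
    hsplit hδ (hφ.bellmanPoint_mem_Omega le_rfl (hAc.trans hcB) le_rfl) hx hy hbal)

/-- The splitting lemma: any interval carrying a `BMO_ε` function can be split
in two so that the segment between the Bellman points of the halves stays in
`Ω_{ε₁}`, with splitting ratio uniformly separated from `0` and `1`. -/
theorem stmt11 (ε ε₁ : ℝ) (hε : 0 < ε) (hεε : ε < ε₁) (A B : ℝ) (hAB : A < B)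
    (φ : ℝ → ℝ) (hφ : BMOe ε A B φ) :
    ∃ c ∈ Set.Ioo A B,
      segment ℝ (avg φ A c, avg (fun t => (φ t) ^ 2) A c)
          (avg φ c B, avg (fun t => (φ t) ^ 2) c B) ⊆ Omega ε₁ ∧
      min (1 / 2) (Real.sqrt (1 - (ε / ε₁) ^ 2)) ≤ min (c - A) (B - c) / (B - A) := by
  have hε₁ : 0 < ε₁ := hε.trans hεε
  have hpos : 0 < 1 - (ε / ε₁) ^ 2 := by
    rw [sub_pos, div_pow, div_lt_one (by positivity)]
    exact pow_lt_pow_left₀ hεε hε.le two_ne_zero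
  set s := √(1 - (ε / ε₁) ^ 2)
  set r := min (1 / 2) s
  have hs : 0 < s := Real.sqrt_pos.2 hpos
  have hδ : ε ^ 2 + (ε₁ * s) ^ 2 = ε₁ ^ 2 := by
    rw [mul_pow, Real.sq_sqrt hpos.le]
    field_simp
    ring
  have hrδ : r * ε₁ ≤ (2 - r) * (ε₁ * s) := by
    have : 1 ≤ 2 - r := by linarith [min_le_left (1 / 2) s]
    calc r * ε₁ ≤ s * ε₁ := mul_le_mul_of_nonneg_right (min_le_right _ _) hε₁.le
      _ ≤ (2 - r) * (ε₁ * s) := by nlinarith [mul_pos hε₁ hs]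
  have hr : 0 < r := lt_min one_half_pos hs
  obtain ⟨c, ⟨hAc, hcB⟩, hbal⟩ :=
    hφ.exists_balanced_point hAB hr (min_le_left _ _) hδ (by positivity) hε₁.le hrδ
  have hrL : 0 < r * (B - A) := mul_pos hr (sub_pos.2 hAB)
  refine ⟨c, ⟨by linarith, by linarith⟩,
    hφ.segment_subset_Omega_of_balanced ⟨by linarith, by linarith⟩ hδ hbal, ?_⟩
  rw [le_div_iff₀ (sub_pos.2 hAB)]
  exact le_min (by linarith) (by linarith)
end
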